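/- arXiv:1807.02356 — 2 statements merged into one kernel-verified Lean document; each statement's English description precedes it below -/
import Mathlib

section
/- In the setting of the RATTLE step on the unit circle (d = 2, M = Id, V = 0, ξ(q) = ‖q‖² − 1) with Δt > 0, ‖q‖ = 1, q·p = 0 and ‖p‖² < Δt⁻², define λ = (−1 + √(1 − Δt²‖p‖²))/(2Δt), q¹ = q + Δt p + 2Δt λ q, and p¹ = the orthogonal projection of p + 2λ q onto the line orthogonal to q¹. Then ‖q¹‖ = 1, q¹·p¹ = 0, and ‖p¹‖ = ‖p‖. -/
open scoped RealInnerProductSpace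

/-- One RATTLE step on the unit circle (with `V = 0`, `M = Id`) stays on the cotangent bundle of
the circle and preserves the norm of the momentum. -/
theorem rattle_circle_step (q p : EuclideanSpace ℝ (Fin 2))
    (hq : ‖q‖ = 1) (hqp : ⟪q, p⟫ = 0) (Δt : ℝ) (hΔt : 0 < Δt)
    (hp : Δt ^ 2 * ‖p‖ ^ 2 < 1)
    (l : ℝ) (hl : l = (-1 + Real.sqrt (1 - Δt ^ 2 * ‖p‖ ^ 2)) / (2 * Δt))
    (q1 p1 : EuclideanSpace ℝ (Fin 2))
    (hq1 : q1 = q + Δt • p + (2 * Δt * l) • q)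
    (hp1 : p1 = (p + (2 * l) • q) - ⟪q1, p + (2 * l) • q⟫ • q1) :
    ‖q1‖ = 1 ∧ ⟪q1, p1⟫ = 0 ∧ ‖p1‖ = ‖p‖ := by
  have hΔne : Δt ≠ 0 := ne_of_gt hΔt
  have hs0 : 0 ≤ 1 - Δt ^ 2 * ‖p‖ ^ 2 := by linarith
  set s := Real.sqrt (1 - Δt ^ 2 * ‖p‖ ^ 2) with hsdef
  have hs2 : s ^ 2 = 1 - Δt ^ 2 * ‖p‖ ^ 2 := Real.sq_sqrt hs0
  have hls : 2 * Δt * l = s - 1 := by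
    rw [hl]; field_simp; ring
  have hq1' : q1 = s • q + Δt • p := by
    rw [hq1]
    have h : (2 * Δt * l) • q = (s - 1) • q := by rw [hls]
    rw [h]; module
  have hqq : ⟪q, q⟫ = 1 := by
    rw [real_inner_self_eq_norm_sq, hq]; norm_num
  have hpq : ⟪p, q⟫ = 0 := by rw [real_inner_comm]; exact hqp
  have hpp : ⟪p, p⟫ = ‖p‖ ^ 2 := real_inner_self_eq_norm_sq p
  have hq1q1 : ⟪q1, q1⟫ = 1 := by
    simp only [hq1', inner_add_left, inner_add_right, real_inner_smul_left,
      real_inner_smul_right, hqq, hpq, hqp, hpp]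
    linear_combination hs2
  have hnq1 : ‖q1‖ = 1 := by
    have h := real_inner_self_eq_norm_sq q1
    nlinarith [norm_nonneg q1]
  have hi : ⟪q1, p + (2 * l) • q⟫ = -(2 * l) := by
    have key : Δt * ⟪q1, p + (2 * l) • q⟫ = Δt * (-(2 * l)) := by
      simp only [hq1', inner_add_left, inner_add_right, real_inner_smul_left,
        real_inner_smul_right, hqq, hpq, hqp, hpp]
      linear_combination (s + 1) * hls + hs2
    exact mul_left_cancel₀ hΔne key
  have hq1p1 : ⟪q1, p1⟫ = 0 := by
    rw [hp1, inner_sub_right, real_inner_smul_right, hq1q1, hi]; ring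
  have hp1p1 : ⟪p1, p1⟫ = ‖p‖ ^ 2 := by
    rw [hp1]
    simp only [inner_sub_left, inner_sub_right, real_inner_smul_left,
      real_inner_smul_right, inner_add_left, inner_add_right, hqq, hpq, hqp, hpp,
      hq1q1]
    have hiA := hi
    simp only [inner_add_right, real_inner_smul_right] at hiA
    have h1 : ⟪p, q1⟫ = ⟪q1, p⟫ := real_inner_comm _ _
    have h2 : ⟪q, q1⟫ = ⟪q1, q⟫ := real_inner_comm _ _
    rw [h1, h2]
    linear_combination (2 * l - (⟪q1, p⟫ + 2 * l * ⟪q1, q⟫)) * hiA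
  have hnp1 : ‖p1‖ = ‖p‖ := by
    have h : ‖p1‖ ^ 2 = ‖p‖ ^ 2 := by
      rw [← real_inner_self_eq_norm_sq, hp1p1]
    calc ‖p1‖ = Real.sqrt (‖p1‖ ^ 2) := (Real.sqrt_sq (norm_nonneg _)).symm
      _ = Real.sqrt (‖p‖ ^ 2) := by rw [h]
      _ = ‖p‖ := Real.sqrt_sq (norm_nonneg _)
  exact ⟨hnq1, hq1p1, hnp1⟩
end

section
/- Consider the circle case: d = 2, M = Id, V = 0, ξ(q) = ‖q‖² − 1, A = { (q,p) : ‖q‖ = 1, q·p = 0, ‖p‖² < Δt⁻² }, and Ψ_{Δt}(q, p) = (q¹, −p¹) defined by the RATTLE step with λ = (−1 + √(1 − Δt²‖p‖²))/(2Δt) as in the explicit solution. Then Ψ_{Δt}(A) = A and for all (q, p) ∈ A, (Ψ_{Δt} ∘ Ψ_{Δt})(q, p) = (q, p). -/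
/-!
On `‖q‖ = 1, ⟪q, p⟫ = 0` the explicit multiplier turns the step into `q¹ = s q + Δt p` and
`-p¹ = Δt‖p‖² q - s p`, where `s = √(1 - Δt²‖p‖²)`. Writing `p = ‖p‖ e` and `c = Δt‖p‖`, this is
`(q, e) ↦ (s q + c e, c q - s e)`, a reflection since `s² + c² = 1`. It preserves `‖q‖ = 1`,
`⟪q, p⟫ = 0` and `‖p‖` (hence `c`), so applying it twice gives the identity.
-/

open scoped RealInnerProductSpace

section Rattle

variable {E : Type*} [NormedAddCommGroup E] [InnerProductSpace ℝ E]

/-- `(q¹, -p¹)` for the RATTLE step with `V = 0` on the unit sphere; `l` is the root of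
`l² + l / Δt + ‖p‖² / 4 = 0` of smallest absolute value. -/
noncomputable def rattleReversed (Δt : ℝ) (x : E × E) : E × E :=
  let l := (-1 + Real.sqrt (1 - Δt ^ 2 * ‖x.2‖ ^ 2)) / (2 * Δt)
  let q₁ := x.1 + Δt • x.2 + (2 * Δt * l) • x.1
  let pHalf := x.2 + (2 * l) • x.1
  (q₁, -(pHalf - ⟪q₁, pHalf⟫ • q₁))

noncomputable def circleReflection (Δt : ℝ) (x : E × E) : E × E :=
  let s := Real.sqrt (1 - Δt ^ 2 * ‖x.2‖ ^ 2)
  (s • x.1 + Δt • x.2, (Δt * ‖x.2‖ ^ 2) • x.1 - s • x.2)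

def rattleDomain (Δt : ℝ) : Set (E × E) :=
  {x | ‖x.1‖ = 1 ∧ ⟪x.1, x.2⟫ = 0 ∧ Δt ^ 2 * ‖x.2‖ ^ 2 < 1}

variable {Δt : ℝ} {q p : E}

lemma rattleReversed_eq_circleReflection (hΔt : Δt ≠ 0) (hq : ‖q‖ = 1) (hqp : ⟪q, p⟫ = 0)
    (hp : Δt ^ 2 * ‖p‖ ^ 2 ≤ 1) :
    rattleReversed Δt (q, p) = circleReflection Δt (q, p) := by
  simp only [rattleReversed, circleReflection, Prod.mk.injEq]
  set s := Real.sqrt (1 - Δt ^ 2 * ‖p‖ ^ 2)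
  have hs : s ^ 2 = 1 - Δt ^ 2 * ‖p‖ ^ 2 := Real.sq_sqrt (sub_nonneg.2 hp)
  have hq₁ : q + Δt • p + (2 * Δt * ((-1 + s) / (2 * Δt))) • q = s • q + Δt • p := by
    match_scalars <;> field_simp
    ring
  have hpHalf : p + (2 * ((-1 + s) / (2 * Δt))) • q = p + ((s - 1) / Δt) • q := by
    congr 2; field_simp; ring
  have hinner : ⟪s • q + Δt • p, p + ((s - 1) / Δt) • q⟫ = (1 - s) / Δt := by
    simp only [inner_add_left, inner_add_right, real_inner_smul_left, real_inner_smul_right,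
      real_inner_comm q p, hqp, real_inner_self_eq_norm_sq, hq]
    field_simp
    linear_combination hs
  rw [hq₁, hpHalf, hinner]
  refine ⟨rfl, ?_⟩
  match_scalars <;> field_simp <;> linarith [hs]

lemma inner_circleReflection (hq : ‖q‖ = 1) (hqp : ⟪q, p⟫ = 0) :
    ⟪(circleReflection Δt (q, p)).1, (circleReflection Δt (q, p)).2⟫ = 0 := by
  simp only [circleReflection, inner_add_left, inner_sub_right, real_inner_smul_left,
    real_inner_smul_right, real_inner_comm q p, hqp, real_inner_self_eq_norm_sq, hq]
  ring

lemma norm_circleReflection_fst (hq : ‖q‖ = 1) (hqp : ⟪q, p⟫ = 0)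
    (hp : Δt ^ 2 * ‖p‖ ^ 2 ≤ 1) : ‖(circleReflection Δt (q, p)).1‖ = 1 := by
  have hs : Real.sqrt (1 - Δt ^ 2 * ‖p‖ ^ 2) ^ 2 = 1 - Δt ^ 2 * ‖p‖ ^ 2 :=
    Real.sq_sqrt (sub_nonneg.2 hp)
  rw [← pow_eq_one_iff_of_nonneg (norm_nonneg _) two_ne_zero, ← real_inner_self_eq_norm_sq]
  simp only [circleReflection, inner_add_left, inner_add_right, real_inner_smul_left,
    real_inner_smul_right, real_inner_comm q p, hqp, real_inner_self_eq_norm_sq q,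
    real_inner_self_eq_norm_sq p, hq]
  linear_combination hs

lemma norm_circleReflection_snd (hq : ‖q‖ = 1) (hqp : ⟪q, p⟫ = 0)
    (hp : Δt ^ 2 * ‖p‖ ^ 2 ≤ 1) : ‖(circleReflection Δt (q, p)).2‖ = ‖p‖ := by
  have hs : Real.sqrt (1 - Δt ^ 2 * ‖p‖ ^ 2) ^ 2 = 1 - Δt ^ 2 * ‖p‖ ^ 2 :=
    Real.sq_sqrt (sub_nonneg.2 hp)
  rw [← sq_eq_sq₀ (norm_nonneg _) (norm_nonneg _), ← real_inner_self_eq_norm_sq]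
  simp only [circleReflection, inner_sub_left, inner_sub_right, real_inner_smul_left,
    real_inner_smul_right, real_inner_comm q p, hqp, real_inner_self_eq_norm_sq q,
    real_inner_self_eq_norm_sq p, hq]
  linear_combination ‖p‖ ^ 2 * hs

lemma mapsTo_circleReflection_rattleDomain :
    Set.MapsTo (circleReflection Δt) (rattleDomain Δt : Set (E × E)) (rattleDomain Δt) := by
  rintro ⟨q, p⟩ ⟨hq, hqp, hp⟩
  refine ⟨norm_circleReflection_fst hq hqp hp.le, inner_circleReflection hq hqp, ?_⟩
  rwa [norm_circleReflection_snd hq hqp hp.le]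

lemma circleReflection_circleReflection {x : E × E} (hx : x ∈ rattleDomain Δt) :
    circleReflection Δt (circleReflection Δt x) = x := by
  obtain ⟨q, p⟩ := x
  obtain ⟨hq, hqp, hp⟩ := hx
  have hs : Real.sqrt (1 - Δt ^ 2 * ‖p‖ ^ 2) ^ 2 = 1 - Δt ^ 2 * ‖p‖ ^ 2 :=
    Real.sq_sqrt (sub_nonneg.2 hp.le)
  conv_lhs => rw [circleReflection, norm_circleReflection_snd hq hqp hp.le]
  simp only [circleReflection, Prod.mk.injEq]
  constructor <;> match_scalars <;> linarith [hs]

lemma image_circleReflection_rattleDomain :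
    circleReflection Δt '' (rattleDomain Δt : Set (E × E)) = rattleDomain Δt :=
  (Set.InvOn.bijOn ⟨fun _ hx ↦ circleReflection_circleReflection hx,
      fun _ hx ↦ circleReflection_circleReflection hx⟩
    mapsTo_circleReflection_rattleDomain mapsTo_circleReflection_rattleDomain).image_eq

lemma eqOn_rattleReversed_circleReflection (hΔt : Δt ≠ 0) :
    Set.EqOn (rattleReversed Δt) (circleReflection Δt) (rattleDomain Δt : Set (E × E)) :=
  fun _ ⟨hq, hqp, hp⟩ ↦ rattleReversed_eq_circleReflection hΔt hq hqp hp.le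

end Rattle

/-- In the circle case (`d = 2`, `M = Id`, `V = 0`, `ξ(q) = ‖q‖² − 1`), the RATTLE map with
momentum reversal `Ψ_{Δt}` maps `A = {(q,p) : ‖q‖ = 1, q·p = 0, ‖p‖² < Δt⁻²}` onto itself and
is an involution on `A`. -/
theorem rattle_circle_involution (Δt : ℝ) (hΔt : 0 < Δt)
    (Ψ : EuclideanSpace ℝ (Fin 2) × EuclideanSpace ℝ (Fin 2) →
         EuclideanSpace ℝ (Fin 2) × EuclideanSpace ℝ (Fin 2))
    (hΨ : ∀ q p : EuclideanSpace ℝ (Fin 2),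
      Ψ (q, p) =
        (q + Δt • p + (2 * Δt * ((-1 + Real.sqrt (1 - Δt ^ 2 * ‖p‖ ^ 2)) / (2 * Δt))) • q,
         -((p + (2 * ((-1 + Real.sqrt (1 - Δt ^ 2 * ‖p‖ ^ 2)) / (2 * Δt))) • q) -
            ⟪q + Δt • p + (2 * Δt * ((-1 + Real.sqrt (1 - Δt ^ 2 * ‖p‖ ^ 2)) / (2 * Δt))) • q,
              p + (2 * ((-1 + Real.sqrt (1 - Δt ^ 2 * ‖p‖ ^ 2)) / (2 * Δt))) • q⟫ •
              (q + Δt • p + (2 * Δt * ((-1 + Real.sqrt (1 - Δt ^ 2 * ‖p‖ ^ 2)) / (2 * Δt))) • q))))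
    (A : Set (EuclideanSpace ℝ (Fin 2) × EuclideanSpace ℝ (Fin 2)))
    (hA : A = {x | ‖x.1‖ = 1 ∧ ⟪x.1, x.2⟫ = 0 ∧ ‖x.2‖ ^ 2 < (Δt ^ 2)⁻¹}) :
    Ψ '' A = A ∧ ∀ x ∈ A, Ψ (Ψ x) = x := by
  have hA' : A = rattleDomain Δt := by
    simp only [hA, rattleDomain, ← lt_inv_mul_iff₀ (pow_pos hΔt 2), mul_one]
  subst hA'
  have hΨ' : Set.EqOn Ψ (circleReflection Δt) (rattleDomain Δt) :=
    fun x hx ↦ (hΨ x.1 x.2).trans (eqOn_rattleReversed_circleReflection hΔt.ne' hx)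
  refine ⟨by rw [hΨ'.image_eq, image_circleReflection_rattleDomain], fun x hx ↦ ?_⟩
  rw [hΨ' hx, hΨ' (mapsTo_circleReflection_rattleDomain hx), circleReflection_circleReflection hx]
end
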